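/- If { j_i }_{i=1}^{k} is an a-reduced family of integers, then Σ_{i=1}^{k} j_i · t_i(a,b,c) < t_{k+1}(a,b,c). -/
import Mathlib


/-- `sF a k = Σ_{i=0}^{k-1} a^i` (so `sF a 0 = 0`). -/
def sF (a k : ℕ) : ℕ := ∑ i ∈ Finset.range k, a ^ i

/-- `tF a b c k = a^k * c + b * sF a k`. -/
def tF (a b c k : ℕ) : ℕ := a ^ k * c + b * sF a k

/-- A θ_{a,b}-semigroup: contains 0, closed under addition, and closed under
`x ↦ a*x + b` on nonzero elements. -/
def IsThetaSG (a b : ℕ) (S : Set ℕ) : Prop :=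
  0 ∈ S ∧ (∀ x ∈ S, ∀ y ∈ S, x + y ∈ S) ∧ ∀ y ∈ S, y ≠ 0 → a * y + b ∈ S

/-- `Gset a b c` : the smallest θ_{a,b}-semigroup containing `c`. -/
def Gset (a b c : ℕ) : Set ℕ := ⋂₀ {S : Set ℕ | IsThetaSG a b S ∧ c ∈ S}

/-- `Hmon a b c` : additive submonoid generated by the `tF a b c k`. -/
def Hmon (a b c : ℕ) : AddSubmonoid ℕ :=
  AddSubmonoid.closure {x | ∃ k, x = tF a b c k}

/-- `{j_i}_{i=1}^k` is `a`-reduced. -/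
def AReduced (a k : ℕ) (j : ℕ → ℕ) : Prop :=
  (∀ i, 1 ≤ i → i ≤ k → j i ≤ a) ∧ j k ≠ 0 ∧
  ∀ m, 1 ≤ m → m ≤ k → j m = a → ∀ i, 1 ≤ i → i < m → j i = 0

lemma sF_succ (a k : ℕ) : sF a (k + 1) = a * sF a k + 1 := by
  unfold sF
  exact geom_sum_succ (x := a) (n := k)

lemma tF_succ (a b c k : ℕ) : tF a b c (k + 1) = a * tF a b c k + b := by
  simp only [tF, sF_succ, pow_succ]
  ring

lemma key (a b c : ℕ) : ∀ k (j : ℕ → ℕ),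
    (∀ i, 1 ≤ i → i ≤ k → j i ≤ a) →
    (∀ m, 1 ≤ m → m ≤ k → j m = a → ∀ i, 1 ≤ i → i < m → j i = 0) →
    ∑ i ∈ Finset.Icc 1 k, j i * tF a b c i + b ≤ tF a b c (k + 1) := by
  intro k
  induction k with
  | zero =>
    intro j _ _
    simp [tF, sF]
  | succ k ih =>
    intro j hle hred
    rw [Finset.sum_Icc_succ_top (by omega : 1 ≤ k + 1)]
    have hT : tF a b c (k + 1 + 1) = a * tF a b c (k + 1) + b :=
      tF_succ a b c (k + 1)
    by_cases hja : j (k + 1) = a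
    · have hz : ∑ i ∈ Finset.Icc 1 k, j i * tF a b c i = 0 := by
        apply Finset.sum_eq_zero
        intro i hi
        simp only [Finset.mem_Icc] at hi
        rw [hred (k+1) (by omega) le_rfl hja i hi.1 (by omega)]
        ring
      rw [hz, hja]
      omega
    · have h1 : j (k + 1) + 1 ≤ a := by
        have := hle (k+1) (by omega) le_rfl
        omega
      have h2 := ih j (fun i h1 h2 => hle i h1 (by omega))
        (fun m hm1 hm2 => hred m hm1 (by omega))
      have h3 : (j (k + 1) + 1) * tF a b c (k + 1) ≤ a * tF a b c (k + 1) :=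
        Nat.mul_le_mul_right _ h1
      rw [add_mul, one_mul] at h3
      omega

theorem stmt12 (a b c : ℕ) (ha : 0 < a) (hb : 0 < b) (hc : 2 ≤ c)
    (k : ℕ) (hk : 1 ≤ k) (j : ℕ → ℕ) (hj : AReduced a k j) :
    ∑ i ∈ Finset.Icc 1 k, j i * tF a b c i < tF a b c (k + 1) := by
  obtain ⟨hle, hne, hred⟩ := hj
  have := key a b c k j hle hred
  omega
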